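/- Let R be a commutative Noetherian local ring with maximal ideal m, K ⊆ R an ideal, g an ideal, and a ∈ R. Suppose there exist natural numbers k₁, k₂ and an element x ∈ m such that (i) xᵏ·g ⊆ (a) + K for all k > k₁, and (ii) x^{k₂}·a ∈ a·g + K. Then for all k > k₁ + k₂ one has xᵏ·g ⊆ a·g + K. -/
import Mathlib


/-- Key inclusion in Lemma 4.2: in a Noetherian local ring, if
`x^k·g ⊆ (a) + K` for all `k > k₁` and `x^{k₂}·a ∈ a·g + K`, then
`x^k·g ⊆ a·g + K` for all `k > k₁ + k₂`. -/
theorem key_inclusion {R : Type*} [CommRing R] [IsNoetherianRing R] [IsLocalRing R]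
    (x a : R) (hx : x ∈ IsLocalRing.maximalIdeal R) (K g : Ideal R)
    (k₁ k₂ : ℕ)
    (h1 : ∀ k : ℕ, k > k₁ → Ideal.span {x ^ k} * g ≤ Ideal.span {a} + K)
    (h2 : x ^ k₂ * a ∈ Ideal.span {a} * g + K) :
    ∀ k : ℕ, k > k₁ + k₂ → Ideal.span {x ^ k} * g ≤ Ideal.span {a} * g + K := by
  intro k hk
  rw [Ideal.mul_le]
  intro r hr b hb
  obtain ⟨c, rfl⟩ := Ideal.mem_span_singleton'.mp hr
  rw [mul_assoc]
  refine Ideal.mul_mem_left _ c ?_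
  -- x^k * b ∈ a·g + K
  have hkk : k - k₂ > k₁ := by omega
  have hmem : x ^ (k - k₂) * b ∈ Ideal.span {a} + K :=
    h1 (k - k₂) hkk (Ideal.mul_mem_mul (Ideal.mem_span_singleton_self _) hb)
  obtain ⟨y, hy, z, hz, hyz⟩ := Submodule.mem_sup.mp hmem
  obtain ⟨c', rfl⟩ := Ideal.mem_span_singleton'.mp hy
  have hsplit : x ^ k = x ^ k₂ * x ^ (k - k₂) := by
    rw [← pow_add]; congr 1; omega
  have : x ^ k * b = c' * (x ^ k₂ * a) + x ^ k₂ * z := by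
    rw [hsplit, mul_assoc, ← hyz]; ring
  rw [this]
  exact add_mem (Ideal.mul_mem_left _ c' h2)
    (Submodule.mem_sup_right (Ideal.mul_mem_left _ _ hz))
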